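/- arXiv:2412.07197 — 3 statements merged into one kernel-verified Lean document; each statement's English description precedes it below -/
import Mathlib

section
/- Let H be a finite-dimensional real inner product space, β > 0, and f_n : H → ℝ (n = 1,…,N) differentiable with β-Lipschitz gradient; set f = (1/N) Σ_{n=1}^N f_n. Let 0 < γ ≤ 1/β and σ ≥ 0. Let (Ω, ℱ, P) be a probability space, 𝒢 ⊆ ℱ a sub-σ-algebra, and w_n : Ω → H (n = 1,…,N) square-integrable 𝒢-measurable random vectors; set w̄ = (1/N) Σ_n w_n. Let g_n : Ω → H be square-integrable random vectors with E[g_n | 𝒢] = ∇f_n(w_n) almost surely for each n, and E[‖(1/N) Σ_n (g_n − ∇f_n(w_n))‖²] ≤ σ²/N. Define w̄⁺ = w̄ − γ (1/N) Σ_n g_n, and assume f(w̄) and f(w̄⁺) are integrable. Then E[f(w̄⁺)] ≤ E[f(w̄)] − (γ/2) E[‖∇f(w̄)‖²] + β γ² σ²/(2N) + (γ/2) E[‖∇f(w̄) − (1/N) Σ_n ∇f_n(w_n)‖²]. -/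
/-!
Smoothness gives the pointwise descent inequality
`f(w̄⁺) ≤ f(w̄) − γ⟪∇f(w̄), G⟫ + βγ²‖G‖²/2` for the averaged stochastic gradient `G`.
Since `∇f(w̄)` and `h = (1/N) Σ ∇f_n(w_n)` are `𝒢`-measurable and `E[G | 𝒢] = h`, taking
expectations replaces `⟪∇f(w̄), G⟫` by `⟪∇f(w̄), h⟫` and splits `E‖G‖²` into
`E‖h‖² + E‖G − h‖²`. Polarisation turns `2⟪∇f(w̄), h⟫` into
`‖∇f(w̄)‖² + ‖h‖² − ‖∇f(w̄) − h‖²`, and the leftover `−(γ/2)(1 − βγ) E‖h‖²` is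
nonpositive because `γ ≤ 1/β`.
-/

open MeasureTheory Finset

open scoped NNReal InnerProductSpace

theorem lipschitzWith_inv_card_smul_sum {ι E F : Type*} [Fintype ι] [PseudoMetricSpace E]
    [SeminormedAddCommGroup F] [NormedSpace ℝ F] {G : ι → E → F} {K : ℝ≥0}
    (hG : ∀ i, LipschitzWith K (G i)) :
    LipschitzWith K (fun x => (Fintype.card ι : ℝ)⁻¹ • ∑ i, G i x) := by
  refine LipschitzWith.of_dist_le_mul fun x y => ?_
  rw [dist_eq_norm, ← smul_sub, ← sum_sub_distrib, norm_smul, Real.norm_of_nonneg (by positivity)]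
  calc (Fintype.card ι : ℝ)⁻¹ * ‖∑ i, (G i x - G i y)‖
      ≤ (Fintype.card ι : ℝ)⁻¹ * ∑ _i : ι, K * dist x y := by
        gcongr with i
        exact (norm_sum_le _ _).trans (sum_le_sum fun i _ => by
          rw [← dist_eq_norm]; exact (hG i).dist_le_mul x y)
    _ ≤ K * dist x y := by
        rw [sum_const, card_univ, nsmul_eq_mul, ← mul_assoc]
        exact mul_le_of_le_one_left (by positivity) (inv_mul_le_one_of_le₀ le_rfl (by positivity))

section Gradient

variable {H : Type*} [NormedAddCommGroup H] [InnerProductSpace ℝ H] [CompleteSpace H]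

theorem HasGradientAt.sum {ι : Type*} {s : Finset ι} {f : ι → H → ℝ} {f' : ι → H} {x : H}
    (hf : ∀ i ∈ s, HasGradientAt (f i) (f' i) x) :
    HasGradientAt (fun y => ∑ i ∈ s, f i y) (∑ i ∈ s, f' i) x := by
  rw [hasGradientAt_iff_hasFDerivAt, map_sum]
  exact HasFDerivAt.fun_sum fun i hi => (hf i hi).hasFDerivAt

theorem HasGradientAt.const_mul {f : H → ℝ} {f' x : H} (hf : HasGradientAt f f' x) (c : ℝ) :
    HasGradientAt (fun y => c * f y) (c • f') x := by
  rw [hasGradientAt_iff_hasFDerivAt, map_smul]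
  exact hf.hasFDerivAt.const_mul c

theorem le_add_inner_add_half_mul_norm_sq {F : H → ℝ} {G : H → H} {K : ℝ≥0}
    (hF : ∀ x, HasGradientAt F (G x) x) (hG : LipschitzWith K G) (x v : H) :
    F (x + v) ≤ F x + ⟪G x, v⟫_ℝ + K / 2 * ‖v‖ ^ 2 := by
  have hline : ∀ t : ℝ, HasDerivAt (fun t => F (x + t • v) - t * ⟪G x, v⟫_ℝ)
      ⟪G (x + t • v) - G x, v⟫_ℝ t := by
    intro t
    have hpath : HasDerivAt (fun t : ℝ => x + t • v) v t := by
      simpa using ((hasDerivAt_id t).smul_const v).const_add x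
    have hcomp := (hF (x + t • v)).hasFDerivAt.comp_hasDerivAt t hpath
    have hF_line : HasDerivAt (fun t : ℝ => F (x + t • v)) ⟪G (x + t • v), v⟫_ℝ t := by
      simpa [Function.comp_def] using hcomp
    rw [inner_sub_left]
    exact hF_line.sub (hasDerivAt_mul_const _)
  have hbound : ∀ t : ℝ,
      HasDerivAt (fun t => F x + K / 2 * t ^ 2 * ‖v‖ ^ 2) (K * t * ‖v‖ ^ 2) t := by
    intro t
    have := (((hasDerivAt_pow 2 t).const_mul ((K : ℝ) / 2)).mul_const (‖v‖ ^ 2)).const_add (F x)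
    exact this.congr_deriv (by push_cast; ring)
  have hslope : ∀ t ∈ Set.Ico (0 : ℝ) 1, ⟪G (x + t • v) - G x, v⟫_ℝ ≤ K * t * ‖v‖ ^ 2 := by
    rintro t ⟨ht, -⟩
    calc ⟪G (x + t • v) - G x, v⟫_ℝ ≤ ‖G (x + t • v) - G x‖ * ‖v‖ := real_inner_le_norm _ _
      _ ≤ K * ‖x + t • v - x‖ * ‖v‖ := by gcongr; exact hG.norm_sub_le _ _
      _ = K * t * ‖v‖ ^ 2 := by
        rw [add_sub_cancel_left, norm_smul, Real.norm_of_nonneg ht]; ring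
  have := image_le_of_deriv_right_le_deriv_boundary
    (fun t _ => (hline t).continuousAt.continuousWithinAt)
    (fun t _ => (hline t).hasDerivWithinAt) (by simp)
    (fun t _ => (hbound t).continuousAt.continuousWithinAt)
    (fun t _ => (hbound t).hasDerivWithinAt) hslope (Set.right_mem_Icc.2 zero_le_one)
  simp only [one_smul, one_mul, one_pow, mul_one] at this
  linarith

end Gradient

section Expectation

variable {Ω : Type*} {m mΩ : MeasurableSpace Ω} {μ : Measure Ω}

theorem LipschitzWith.comp_memLp_of_isFiniteMeasure [IsFiniteMeasure μ]
    {E F : Type*} [NormedAddCommGroup E] [NormedAddCommGroup F] {g : E → F} {K : ℝ≥0}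
    (hg : LipschitzWith K g) {p : ENNReal} {f : Ω → E} (hf : MemLp f p μ) :
    MemLp (fun ω => g (f ω)) p μ := by
  have hshift : MemLp (fun ω => g (f ω) - g 0) p μ :=
    hf.of_le_mul (hg.continuous.comp_aestronglyMeasurable hf.1 |>.sub aestronglyMeasurable_const)
      (Filter.Eventually.of_forall fun ω => by simpa using hg.norm_sub_le (f ω) 0)
  convert hshift.add (memLp_const (g 0)) using 1
  ext ω
  simp

variable {H : Type*} [NormedAddCommGroup H] [InnerProductSpace ℝ H]

theorem MeasureTheory.MemLp.integrable_inner {X Y : Ω → H} (hX : MemLp X 2 μ)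
    (hY : MemLp Y 2 μ) : Integrable (fun ω => ⟪X ω, Y ω⟫_ℝ) μ :=
  memLp_one_iff_integrable.1 ((innerSL ℝ (E := H)).memLp_of_bilin 1 hX hY)

theorem integral_inner_eq_sq_add_sq_sub_sq_div_two {X Y : Ω → H} (hX : MemLp X 2 μ)
    (hY : MemLp Y 2 μ) :
    ∫ ω, ⟪X ω, Y ω⟫_ℝ ∂μ =
      ((∫ ω, ‖X ω‖ ^ 2 ∂μ) + (∫ ω, ‖Y ω‖ ^ 2 ∂μ) - ∫ ω, ‖X ω - Y ω‖ ^ 2 ∂μ) / 2 := by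
  simp_rw [real_inner_eq_norm_mul_self_add_norm_mul_self_sub_norm_sub_mul_self_div_two, ← sq]
  rw [integral_div, integral_sub (f := fun ω => ‖X ω‖ ^ 2 + ‖Y ω‖ ^ 2)
      (g := fun ω => ‖X ω - Y ω‖ ^ 2) (hX.norm.integrable_sq.add hY.norm.integrable_sq)
      (hX.sub hY).norm.integrable_sq,
    integral_add hX.norm.integrable_sq hY.norm.integrable_sq]

variable [CompleteSpace H]

theorem integral_inner_eq_of_condExp_ae_eq (hm : m ≤ mΩ) [SigmaFinite (μ.trim hm)]
    {X Y Z : Ω → H} (hX : StronglyMeasurable[m] X)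
    (hXY : Integrable (fun ω => ⟪X ω, Y ω⟫_ℝ) μ) (hY : Integrable Y μ) (hYZ : μ[Y | m] =ᵐ[μ] Z) :
    ∫ ω, ⟪X ω, Y ω⟫_ℝ ∂μ = ∫ ω, ⟪X ω, Z ω⟫_ℝ ∂μ := by
  have hpull : μ[fun ω => ⟪X ω, Y ω⟫_ℝ | m] =ᵐ[μ] fun ω => ⟪X ω, μ[Y | m] ω⟫_ℝ :=
    condExp_bilin_of_stronglyMeasurable_left (innerSL ℝ) hX hXY hY
  rw [← integral_condExp hm]
  refine integral_congr_ae ?_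
  filter_upwards [hpull, hYZ] with ω hpullω hYZω
  rw [hpullω, hYZω]

theorem integral_norm_sq_eq_add_of_condExp_ae_eq [IsFiniteMeasure μ] (hm : m ≤ mΩ)
    {Y Z : Ω → H} (hZ : StronglyMeasurable[m] Z) (hZ2 : MemLp Z 2 μ) (hY2 : MemLp Y 2 μ)
    (hYZ : μ[Y | m] =ᵐ[μ] Z) :
    ∫ ω, ‖Y ω‖ ^ 2 ∂μ = (∫ ω, ‖Z ω‖ ^ 2 ∂μ) + ∫ ω, ‖Y ω - Z ω‖ ^ 2 ∂μ := by
  have hcross : ∫ ω, ⟪Z ω, Y ω⟫_ℝ ∂μ = ∫ ω, ‖Z ω‖ ^ 2 ∂μ := by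
    rw [integral_inner_eq_of_condExp_ae_eq hm hZ (hZ2.integrable_inner hY2)
      (hY2.integrable one_le_two) hYZ]
    simp_rw [real_inner_self_eq_norm_sq]
  have hpolar := integral_inner_eq_sq_add_sq_sub_sq_div_two hZ2 hY2
  simp_rw [norm_sub_rev (Z _)] at hpolar
  linarith

theorem condExp_smul_sum_ae_eq {ι : Type*} [Fintype ι] (c : ℝ) {Y Z : ι → Ω → H}
    (hY : ∀ i, Integrable (Y i) μ) (hYZ : ∀ i, μ[Y i | m] =ᵐ[μ] Z i) :
    μ[fun ω => c • ∑ i, Y i ω | m] =ᵐ[μ] fun ω => c • ∑ i, Z i ω := by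
  have hfun : (fun ω => c • ∑ i, Y i ω) = c • ∑ i, Y i := by ext; simp
  rw [hfun]
  filter_upwards [condExp_smul c (∑ i, Y i) m, condExp_finsetSum (s := univ) (fun i _ => hY i) m,
    ae_all_iff.2 hYZ] with ω hsmul hsum hYZω
  simp [hsmul, hsum, Finset.sum_apply, hYZω]

end Expectation

section Descent

variable {H : Type*} [NormedAddCommGroup H] [InnerProductSpace ℝ H] [CompleteSpace H]
  {Ω : Type*} {m mΩ : MeasurableSpace Ω} {μ : Measure Ω}
  {F : H → ℝ} {GF : H → H} {K : ℝ≥0}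

theorem integral_comp_sub_smul_le (hF : ∀ x, HasGradientAt F (GF x) x) (hGF : LipschitzWith K GF)
    {W G : Ω → H} (γ : ℝ) (hFW : Integrable (fun ω => F (W ω)) μ)
    (hFW' : Integrable (fun ω => F (W ω - γ • G ω)) μ)
    (hinner : Integrable (fun ω => ⟪GF (W ω), G ω⟫_ℝ) μ)
    (hG : Integrable (fun ω => ‖G ω‖ ^ 2) μ) :
    ∫ ω, F (W ω - γ • G ω) ∂μ ≤
      (∫ ω, F (W ω) ∂μ) - γ * (∫ ω, ⟪GF (W ω), G ω⟫_ℝ ∂μ) + K / 2 * γ ^ 2 * ∫ ω, ‖G ω‖ ^ 2 ∂μ := by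
  have hstep : ∀ ω, F (W ω - γ • G ω) ≤
      F (W ω) - γ * ⟪GF (W ω), G ω⟫_ℝ + K / 2 * γ ^ 2 * ‖G ω‖ ^ 2 := fun ω => by
    have := le_add_inner_add_half_mul_norm_sq hF hGF (W ω) (-(γ • G ω))
    rw [← sub_eq_add_neg, inner_neg_right, real_inner_smul_right, norm_neg, norm_smul,
      Real.norm_eq_abs, mul_pow, sq_abs] at this
    linarith
  calc ∫ ω, F (W ω - γ • G ω) ∂μ
      ≤ ∫ ω, (F (W ω) - γ * ⟪GF (W ω), G ω⟫_ℝ + K / 2 * γ ^ 2 * ‖G ω‖ ^ 2) ∂μ :=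
        integral_mono hFW' ((hFW.sub (hinner.const_mul γ)).add (hG.const_mul _)) hstep
    _ = _ := by
        rw [integral_add (f := fun ω => F (W ω) - γ * ⟪GF (W ω), G ω⟫_ℝ)
            (hFW.sub (hinner.const_mul γ)) (hG.const_mul _),
          integral_sub hFW (hinner.const_mul γ), integral_const_mul, integral_const_mul]

theorem integral_sgd_step_le [IsFiniteMeasure μ] (hm : m ≤ mΩ)
    (hF : ∀ x, HasGradientAt F (GF x) x) (hGF : LipschitzWith K GF)
    {γ v : ℝ} (hγ : 0 ≤ γ) (hKγ : K * γ ≤ 1) {W G Z : Ω → H}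
    (hW : StronglyMeasurable[m] W) (hW2 : MemLp W 2 μ) (hG2 : MemLp G 2 μ)
    (hZ : StronglyMeasurable[m] Z) (hZ2 : MemLp Z 2 μ) (hGZ : μ[G | m] =ᵐ[μ] Z)
    (hvar : ∫ ω, ‖G ω - Z ω‖ ^ 2 ∂μ ≤ v)
    (hFW : Integrable (fun ω => F (W ω)) μ)
    (hFW' : Integrable (fun ω => F (W ω - γ • G ω)) μ) :
    ∫ ω, F (W ω - γ • G ω) ∂μ ≤ (∫ ω, F (W ω) ∂μ)
      - γ / 2 * ∫ ω, ‖GF (W ω)‖ ^ 2 ∂μ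
      + K * γ ^ 2 * v / 2
      + γ / 2 * ∫ ω, ‖GF (W ω) - Z ω‖ ^ 2 ∂μ := by
  have hA : StronglyMeasurable[m] (fun ω => GF (W ω)) := hGF.continuous.comp_stronglyMeasurable hW
  have hA2 : MemLp (fun ω => GF (W ω)) 2 μ := hGF.comp_memLp_of_isFiniteMeasure hW2
  have hdescent := integral_comp_sub_smul_le hF hGF γ hFW hFW' (hA2.integrable_inner hG2)
    hG2.norm.integrable_sq
  have hcross := integral_inner_eq_of_condExp_ae_eq hm hA (hA2.integrable_inner hG2)
    (hG2.integrable one_le_two) hGZ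
  rw [hcross, integral_inner_eq_sq_add_sq_sub_sq_div_two hA2 hZ2,
    integral_norm_sq_eq_add_of_condExp_ae_eq hm hZ hZ2 hG2 hGZ] at hdescent
  have hZ_nonneg : 0 ≤ ∫ ω, ‖Z ω‖ ^ 2 ∂μ := integral_nonneg fun ω => sq_nonneg _
  have hdamp := mul_nonneg (mul_nonneg hγ (sub_nonneg.2 hKγ)) hZ_nonneg
  have hnoise := mul_le_mul_of_nonneg_left hvar (by positivity : (0 : ℝ) ≤ K * γ ^ 2)
  linarith

end Descent

theorem hsfl_descent_inequality_general
    {H : Type*} [NormedAddCommGroup H] [InnerProductSpace ℝ H] [FiniteDimensional ℝ H]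
    (β : ℝ) (hβ : 0 < β) {N : ℕ}
    (f : Fin N → H → ℝ)
    (hdiff : ∀ n, Differentiable ℝ (f n))
    (hsmooth : ∀ n (u v : H), ‖gradient (f n) u - gradient (f n) v‖ ≤ β * ‖u - v‖)
    (γ : ℝ) (hγ0 : 0 < γ) (hγβ : γ ≤ 1 / β)
    (σ : ℝ)
    {Ω : Type*} {mΩ : MeasurableSpace Ω} (P : Measure Ω) [IsProbabilityMeasure P]
    (m𝒢 : MeasurableSpace Ω) (hm𝒢 : m𝒢 ≤ mΩ)
    (w : Fin N → Ω → H)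
    (hwmeas : ∀ n, StronglyMeasurable[m𝒢] (w n))
    (hwL2 : ∀ n, MemLp (w n) 2 P)
    (g : Fin N → Ω → H)
    (hgL2 : ∀ n, MemLp (g n) 2 P)
    (hunbiased : ∀ n, P[g n | m𝒢] =ᵐ[P] fun ω => gradient (f n) (w n ω))
    (hvar : ∫ ω, ‖(N : ℝ)⁻¹ • ∑ n, (g n ω - gradient (f n) (w n ω))‖ ^ 2 ∂P ≤ σ ^ 2 / N)
    (hint1 : Integrable
      (fun ω => (N : ℝ)⁻¹ * ∑ n, f n ((N : ℝ)⁻¹ • ∑ n', w n' ω)) P)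
    (hint2 : Integrable
      (fun ω => (N : ℝ)⁻¹ * ∑ n, f n
        ((N : ℝ)⁻¹ • ∑ n', w n' ω - γ • ((N : ℝ)⁻¹ • ∑ n', g n' ω))) P) :
    ∫ ω, (N : ℝ)⁻¹ * ∑ n, f n
        ((N : ℝ)⁻¹ • ∑ n', w n' ω - γ • ((N : ℝ)⁻¹ • ∑ n', g n' ω)) ∂P
      ≤ (∫ ω, (N : ℝ)⁻¹ * ∑ n, f n ((N : ℝ)⁻¹ • ∑ n', w n' ω) ∂P)
        - (γ / 2) * ∫ ω, ‖gradient (fun x => (N : ℝ)⁻¹ * ∑ n, f n x)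
            ((N : ℝ)⁻¹ • ∑ n', w n' ω)‖ ^ 2 ∂P
        + β * γ ^ 2 * σ ^ 2 / (2 * N)
        + (γ / 2) * ∫ ω, ‖gradient (fun x => (N : ℝ)⁻¹ * ∑ n, f n x)
              ((N : ℝ)⁻¹ • ∑ n', w n' ω)
            - (N : ℝ)⁻¹ • ∑ n, gradient (f n) (w n ω)‖ ^ 2 ∂P := by
  have hgrad : ∀ x, HasGradientAt (fun x => (N : ℝ)⁻¹ * ∑ n, f n x)
      ((N : ℝ)⁻¹ • ∑ n, gradient (f n) x) x := fun x =>
    (HasGradientAt.sum fun n _ => (hdiff n x).hasGradientAt).const_mul _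
  have hlip : ∀ n, LipschitzWith β.toNNReal (gradient (f n)) := fun n =>
    LipschitzWith.of_dist_le' fun u v => by simpa only [dist_eq_norm] using hsmooth n u v
  have hlip_avg : LipschitzWith β.toNNReal (fun x => (N : ℝ)⁻¹ • ∑ n, gradient (f n) x) := by
    simpa using lipschitzWith_inv_card_smul_sum hlip
  have hβγ : (β.toNNReal : ℝ) * γ ≤ 1 := by
    rwa [Real.coe_toNNReal _ hβ.le, ← le_div_iff₀' hβ]
  have hstep := integral_sgd_step_le hm𝒢 hgrad hlip_avg hγ0.le hβγ
    (W := fun ω => (N : ℝ)⁻¹ • ∑ n, w n ω) (G := fun ω => (N : ℝ)⁻¹ • ∑ n, g n ω)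
    (Z := fun ω => (N : ℝ)⁻¹ • ∑ n, gradient (f n) (w n ω))
    ((stronglyMeasurable_fun_sum _ fun n _ => hwmeas n).const_smul _)
    ((memLp_finsetSum _ fun n _ => hwL2 n).const_smul _)
    ((memLp_finsetSum _ fun n _ => hgL2 n).const_smul _)
    ((stronglyMeasurable_fun_sum _ fun n _ =>
      (hlip n).continuous.comp_stronglyMeasurable (hwmeas n)).const_smul _)
    ((memLp_finsetSum _ fun n _ => (hlip n).comp_memLp_of_isFiniteMeasure (hwL2 n)).const_smul _)
    (condExp_smul_sum_ae_eq _ (fun n => (hgL2 n).integrable one_le_two) hunbiased)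
    (by simpa only [smul_sub, sum_sub_distrib] using hvar) hint1 hint2
  rw [Real.coe_toNNReal _ hβ.le] at hstep
  simp only [fun x => (hgrad x).gradient]
  exact hstep.trans_eq (by ring)

/-- **Per-round descent inequality (Eqn. (eq:11) in the proof of Theorem 1).** One step
of averaged stochastic gradient descent with conditionally unbiased stochastic gradients
`g_n` (given the sub-σ-algebra `m𝒢` that measures the client models `w_n`), averaged
variance bound `σ²/N`, and step size `0 < γ ≤ 1/β` satisfies
`E[f(w̄⁺)] ≤ E[f(w̄)] − (γ/2) E[‖∇f(w̄)‖²] + βγ²σ²/(2N)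
  + (γ/2) E[‖∇f(w̄) − (1/N) Σ_n ∇f_n(w_n)‖²]`,
where `w̄ = (1/N) Σ_n w_n` and `w̄⁺ = w̄ − γ (1/N) Σ_n g_n`. -/
theorem hsfl_descent_inequality
    {H : Type*} [NormedAddCommGroup H] [InnerProductSpace ℝ H] [FiniteDimensional ℝ H]
    (β : ℝ) (hβ : 0 < β) {N : ℕ} (hN : 1 ≤ N)
    (f : Fin N → H → ℝ)
    (hdiff : ∀ n, Differentiable ℝ (f n))
    (hsmooth : ∀ n (u v : H), ‖gradient (f n) u - gradient (f n) v‖ ≤ β * ‖u - v‖)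
    (γ : ℝ) (hγ0 : 0 < γ) (hγβ : γ ≤ 1 / β)
    (σ : ℝ) (hσ : 0 ≤ σ)
    {Ω : Type*} {mΩ : MeasurableSpace Ω} (P : Measure Ω) [IsProbabilityMeasure P]
    (m𝒢 : MeasurableSpace Ω) (hm𝒢 : m𝒢 ≤ mΩ)
    (w : Fin N → Ω → H)
    (hwmeas : ∀ n, StronglyMeasurable[m𝒢] (w n))
    (hwL2 : ∀ n, MemLp (w n) 2 P)
    (g : Fin N → Ω → H)
    (hgL2 : ∀ n, MemLp (g n) 2 P)
    (hunbiased : ∀ n, P[g n | m𝒢] =ᵐ[P] fun ω => gradient (f n) (w n ω))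
    (hvar : ∫ ω, ‖(N : ℝ)⁻¹ • ∑ n, (g n ω - gradient (f n) (w n ω))‖ ^ 2 ∂P ≤ σ ^ 2 / N)
    (hint1 : Integrable
      (fun ω => (N : ℝ)⁻¹ * ∑ n, f n ((N : ℝ)⁻¹ • ∑ n', w n' ω)) P)
    (hint2 : Integrable
      (fun ω => (N : ℝ)⁻¹ * ∑ n, f n
        ((N : ℝ)⁻¹ • ∑ n', w n' ω - γ • ((N : ℝ)⁻¹ • ∑ n', g n' ω))) P) :
    ∫ ω, (N : ℝ)⁻¹ * ∑ n, f n
        ((N : ℝ)⁻¹ • ∑ n', w n' ω - γ • ((N : ℝ)⁻¹ • ∑ n', g n' ω)) ∂P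
      ≤ (∫ ω, (N : ℝ)⁻¹ * ∑ n, f n ((N : ℝ)⁻¹ • ∑ n', w n' ω) ∂P)
        - (γ / 2) * ∫ ω, ‖gradient (fun x => (N : ℝ)⁻¹ * ∑ n, f n x)
            ((N : ℝ)⁻¹ • ∑ n', w n' ω)‖ ^ 2 ∂P
        + β * γ ^ 2 * σ ^ 2 / (2 * N)
        + (γ / 2) * ∫ ω, ‖gradient (fun x => (N : ℝ)⁻¹ * ∑ n, f n x)
              ((N : ℝ)⁻¹ • ∑ n', w n' ω)
            - (N : ℝ)⁻¹ • ∑ n, gradient (f n) (w n ω)‖ ^ 2 ∂P :=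
  hsfl_descent_inequality_general β hβ f hdiff hsmooth γ hγ0 hγβ σ P m𝒢 hm𝒢 w hwmeas hwL2 g hgL2
    hunbiased hvar hint1 hint2
end

section
/- Let a, b, c, k > 0 and define ξ(x) = 2 a k x³ + 3 b k x² − b c. Then ξ has a unique root x̂ in (0, ∞), and this root satisfies x̂ < √(c/k); in particular ξ(0) = −bc < 0 and ξ(√(c/k)) = 2 a c √(c/k) + 2 b c > 0. -/
open Set

lemma hsfl_aux (a b c k : ℝ) (ha : 0 < a) (hb : 0 < b) (hc : 0 < c) (hk : 0 < k) :
    let s := Real.sqrt (c / k)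
    0 < s ∧ s ^ 2 = c / k := by
  have h : 0 < c / k := div_pos hc hk
  exact ⟨Real.sqrt_pos.mpr h, Real.sq_sqrt h.le⟩

/-- **The stationary point lies inside the feasible domain** (Proposition 1, Appendix C):
the cubic `ξ(x) = 2 a k x³ + 3 b k x² − b c` has a unique root in `(0, ∞)`, this root is
less than `√(c/k)`, and in particular `ξ(0) = −bc < 0` while
`ξ(√(c/k)) = 2 a c √(c/k) + 2 b c > 0`. -/
theorem hsfl_cubic_root_feasible
    (a b c k : ℝ) (ha : 0 < a) (hb : 0 < b) (hc : 0 < c) (hk : 0 < k) :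
    (∃! xhat : ℝ, 0 < xhat ∧ 2 * a * k * xhat ^ 3 + 3 * b * k * xhat ^ 2 - b * c = 0) ∧
    (∀ xhat : ℝ, 0 < xhat → 2 * a * k * xhat ^ 3 + 3 * b * k * xhat ^ 2 - b * c = 0 →
      xhat < Real.sqrt (c / k)) ∧
    (2 * a * k * (0 : ℝ) ^ 3 + 3 * b * k * (0 : ℝ) ^ 2 - b * c = -(b * c) ∧ -(b * c) < 0) ∧
    (2 * a * k * Real.sqrt (c / k) ^ 3 + 3 * b * k * Real.sqrt (c / k) ^ 2 - b * c
        = 2 * a * c * Real.sqrt (c / k) + 2 * b * c ∧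
      0 < 2 * a * c * Real.sqrt (c / k) + 2 * b * c) := by
  set s := Real.sqrt (c / k) with hs
  obtain ⟨hspos, hssq⟩ := hsfl_aux a b c k ha hb hc hk
  have hks : k * s ^ 2 = c := by rw [hs, hssq]; field_simp
  have hs3 : 2 * a * k * s ^ 3 + 3 * b * k * s ^ 2 - b * c
      = 2 * a * c * s + 2 * b * c := by
    linear_combination (2 * a * s + 3 * b) * hks
  have hfs : 0 < 2 * a * c * s + 2 * b * c := by positivity
  -- uniqueness helper
  have huniq : ∀ x y : ℝ, 0 < x → 0 < y →
      2 * a * k * x ^ 3 + 3 * b * k * x ^ 2 - b * c = 0 →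
      2 * a * k * y ^ 3 + 3 * b * k * y ^ 2 - b * c = 0 → x = y := by
    intro x y hx hy hfx hfy
    have hfac : 0 < 2 * a * k * (x ^ 2 + x * y + y ^ 2) + 3 * b * k * (x + y) := by
      positivity
    by_contra hne
    rcases lt_or_gt_of_ne hne with h | h
    · nlinarith [mul_pos (sub_pos.mpr h) hfac]
    · nlinarith [mul_pos (sub_pos.mpr h) hfac]
  -- existence via IVT
  have hcont : ContinuousOn (fun x : ℝ => 2 * a * k * x ^ 3 + 3 * b * k * x ^ 2 - b * c)
      (Icc 0 s) := by fun_prop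
  have h0 : (fun x : ℝ => 2 * a * k * x ^ 3 + 3 * b * k * x ^ 2 - b * c) 0 < 0 := by
    simp; nlinarith
  have hIVT := intermediate_value_Ioo hspos.le hcont (a := 0)
  have hmem : (0 : ℝ) ∈ Ioo ((fun x : ℝ => 2 * a * k * x ^ 3 + 3 * b * k * x ^ 2 - b * c) 0)
      ((fun x : ℝ => 2 * a * k * x ^ 3 + 3 * b * k * x ^ 2 - b * c) s) := by
    constructor
    · simpa using h0
    · simp only []
      rw [hs3]; exact hfs
  obtain ⟨x, hxmem, hxz⟩ := hIVT hmem
  refine ⟨⟨x, ⟨hxmem.1, hxz⟩, ?_⟩, ?_, ?_, hs3, hfs⟩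
  · rintro y ⟨hy, hfy⟩
    exact huniq y x hy hxmem.1 hfy hxz
  · intro y hy hfy
    have := huniq y x hy hxmem.1 hfy hxz
    rw [this]; exact hxmem.2
  · constructor
    · ring
    · nlinarith
end

section
/- Let a, b, c, k > 0 with k < c (so √(c/k) > 1), define Θ(I) = (a I + b)/(I (c − k I²)) for real I ∈ (0, √(c/k)), and let Î be the unique positive root of the cubic ξ(I) = 2 a k I³ + 3 b k I² − b c. If ⌈Î⌉ < √(c/k), then for every positive integer I with k I² < c, Θ(I) ≥ min( Θ(max(⌊Î⌋, 1)), Θ(⌈Î⌉) ); that is, the minimizer of Θ over the positive integers I satisfying k I² < c belongs to the set {max(⌊Î⌋, 1), ⌈Î⌉}. -/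
open Set

lemma theta_anti (a b c k : ℝ) (ha : 0 < a) (hb : 0 < b) (hk : 0 < k) (Ihat : ℝ)
    (hroot : 2 * a * k * Ihat ^ 3 + 3 * b * k * Ihat ^ 2 - b * c = 0)
    (x y : ℝ) (hx : 0 < x) (hxy : x ≤ y) (hyI : y ≤ Ihat) (hyc : k * y ^ 2 < c) :
    (a * y + b) / (y * (c - k * y ^ 2)) ≤ (a * x + b) / (x * (c - k * x ^ 2)) := by
  have hy : 0 < y := lt_of_lt_of_le hx hxy
  have hI : 0 < Ihat := lt_of_lt_of_le hy hyI
  have hxI : x ≤ Ihat := hxy.trans hyI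
  have hdy : 0 < y * (c - k * y ^ 2) := mul_pos hy (by linarith)
  have hxc : k * x ^ 2 < c := by
    have : x ^ 2 ≤ y ^ 2 := pow_le_pow_left₀ hx.le hxy 2
    nlinarith
  have hdx : 0 < x * (c - k * x ^ 2) := mul_pos hx (by linarith)
  rw [div_le_div_iff₀ hdy hdx]
  have h1 : x * x * y + x * y * y ≤ 2 * Ihat ^ 3 := by
    have e1 : x * x * y ≤ Ihat * Ihat * Ihat :=
      mul_le_mul (mul_le_mul hxI hxI hx.le hI.le) hyI hy.le (by positivity)
    have e2 : x * y * y ≤ Ihat * Ihat * Ihat :=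
      mul_le_mul (mul_le_mul hxI hyI hy.le hI.le) hyI hy.le (by positivity)
    nlinarith
  have h2 : x ^ 2 + x * y + y ^ 2 ≤ 3 * Ihat ^ 2 := by
    have e1 : x * y ≤ Ihat * Ihat := mul_le_mul hxI hyI hy.le hI.le
    have e2 : x ^ 2 ≤ Ihat ^ 2 := pow_le_pow_left₀ hx.le hxI 2
    have e3 : y ^ 2 ≤ Ihat ^ 2 := pow_le_pow_left₀ hy.le hyI 2
    nlinarith
  have hg : 0 ≤ b * c - a * k * x * y * (x + y) - b * k * (x ^ 2 + x * y + y ^ 2) := by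
    have f1 := mul_le_mul_of_nonneg_left h1 (by positivity : (0:ℝ) ≤ a * k)
    have f2 := mul_le_mul_of_nonneg_left h2 (by positivity : (0:ℝ) ≤ b * k)
    nlinarith
  nlinarith [mul_nonneg (sub_nonneg.2 hxy) hg]

lemma theta_mono (a b c k : ℝ) (ha : 0 < a) (hb : 0 < b) (hk : 0 < k) (Ihat : ℝ)
    (hIhat0 : 0 < Ihat)
    (hroot : 2 * a * k * Ihat ^ 3 + 3 * b * k * Ihat ^ 2 - b * c = 0)
    (x y : ℝ) (hIx : Ihat ≤ x) (hxy : x ≤ y) (hyc : k * y ^ 2 < c) :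
    (a * x + b) / (x * (c - k * x ^ 2)) ≤ (a * y + b) / (y * (c - k * y ^ 2)) := by
  have hx : 0 < x := lt_of_lt_of_le hIhat0 hIx
  have hy : 0 < y := lt_of_lt_of_le hx hxy
  have hIy : Ihat ≤ y := hIx.trans hxy
  have hdy : 0 < y * (c - k * y ^ 2) := mul_pos hy (by linarith)
  have hxc : k * x ^ 2 < c := by
    have : x ^ 2 ≤ y ^ 2 := pow_le_pow_left₀ hx.le hxy 2
    nlinarith
  have hdx : 0 < x * (c - k * x ^ 2) := mul_pos hx (by linarith)
  rw [div_le_div_iff₀ hdx hdy]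
  have h1 : 2 * Ihat ^ 3 ≤ x * x * y + x * y * y := by
    have e1 : Ihat * Ihat * Ihat ≤ x * x * y :=
      mul_le_mul (mul_le_mul hIx hIx hIhat0.le hx.le) hIy hIhat0.le (by positivity)
    have e2 : Ihat * Ihat * Ihat ≤ x * y * y :=
      mul_le_mul (mul_le_mul hIx hIy hIhat0.le hx.le) hIy hIhat0.le (by positivity)
    nlinarith
  have h2 : 3 * Ihat ^ 2 ≤ x ^ 2 + x * y + y ^ 2 := by
    have e1 : Ihat * Ihat ≤ x * y := mul_le_mul hIx hIy hIhat0.le hx.le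
    have e2 : Ihat ^ 2 ≤ x ^ 2 := pow_le_pow_left₀ hIhat0.le hIx 2
    have e3 : Ihat ^ 2 ≤ y ^ 2 := pow_le_pow_left₀ hIhat0.le hIy 2
    nlinarith
  have hg : b * c - a * k * x * y * (x + y) - b * k * (x ^ 2 + x * y + y ^ 2) ≤ 0 := by
    have f1 := mul_le_mul_of_nonneg_left h1 (by positivity : (0:ℝ) ≤ a * k)
    have f2 := mul_le_mul_of_nonneg_left h2 (by positivity : (0:ℝ) ≤ b * k)
    nlinarith
  nlinarith [mul_nonpos_of_nonneg_of_nonpos (sub_nonneg.2 hxy) hg]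

/-- **Proposition 1 (single remaining tier).** For the training-time objective
`Θ(I) = (a I + b)/(I (c − k I²))` of hierarchical split federated learning, with `Ihat`
the unique positive root of the cubic `2 a k I³ + 3 b k I² − b c` and `⌈Ihat⌉ < √(c/k)`,
the minimizer of `Θ` over the positive integers `I` with `k I² < c` belongs to
`{max(⌊Ihat⌋, 1), ⌈Ihat⌉}`. -/
theorem hsfl_proposition1
    (a b c k : ℝ) (ha : 0 < a) (hb : 0 < b) (hc : 0 < c) (hk : 0 < k)
    (hkc : k < c)
    (Ihat : ℝ) (hIhat0 : 0 < Ihat)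
    (hroot : 2 * a * k * Ihat ^ 3 + 3 * b * k * Ihat ^ 2 - b * c = 0)
    (hceil : ((⌈Ihat⌉ : ℤ) : ℝ) < Real.sqrt (c / k)) :
    ∀ I : ℕ, 0 < I → k * (I : ℝ) ^ 2 < c →
      min ((a * ((max ⌊Ihat⌋ 1 : ℤ) : ℝ) + b)
            / (((max ⌊Ihat⌋ 1 : ℤ) : ℝ) * (c - k * ((max ⌊Ihat⌋ 1 : ℤ) : ℝ) ^ 2)))
          ((a * ((⌈Ihat⌉ : ℤ) : ℝ) + b)
            / (((⌈Ihat⌉ : ℤ) : ℝ) * (c - k * ((⌈Ihat⌉ : ℤ) : ℝ) ^ 2)))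
        ≤ (a * (I : ℝ) + b) / ((I : ℝ) * (c - k * (I : ℝ) ^ 2)) := by

  intro I hI hIc
  have hI1 : (1 : ℝ) ≤ (I : ℝ) := by exact_mod_cast hI
  have hceil1 : (1 : ℤ) ≤ ⌈Ihat⌉ := Int.one_le_ceil_iff.2 hIhat0
  have hceilR : (0 : ℝ) < ((⌈Ihat⌉ : ℤ) : ℝ) := by exact_mod_cast hceil1
  have hceilc : k * ((⌈Ihat⌉ : ℤ) : ℝ) ^ 2 < c := by
    have h2 : ((⌈Ihat⌉ : ℤ) : ℝ) ^ 2 < c / k := (Real.lt_sqrt hceilR.le).1 hceil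
    have := (lt_div_iff₀ hk).1 h2; linarith [this]
  rcases le_or_gt (I : ℝ) Ihat with hle | hgt
  · -- I ≤ Ihat : use the decreasing branch with the floor point
    have hfl : (I : ℤ) ≤ ⌊Ihat⌋ := Int.le_floor.2 (by exact_mod_cast hle)
    have h1fl : (1 : ℤ) ≤ ⌊Ihat⌋ := le_trans (by exact_mod_cast hI) hfl
    have hmax : max ⌊Ihat⌋ 1 = ⌊Ihat⌋ := max_eq_left h1fl
    have hflR : (I : ℝ) ≤ ((⌊Ihat⌋ : ℤ) : ℝ) := by exact_mod_cast hfl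
    have hflI : ((⌊Ihat⌋ : ℤ) : ℝ) ≤ Ihat := Int.floor_le Ihat
    have hflc : k * ((⌊Ihat⌋ : ℤ) : ℝ) ^ 2 < c := by
      have hle2 : ((⌊Ihat⌋ : ℤ) : ℝ) ≤ ((⌈Ihat⌉ : ℤ) : ℝ) := by
        exact_mod_cast Int.floor_le_ceil Ihat
      have hpos : (0 : ℝ) < ((⌊Ihat⌋ : ℤ) : ℝ) := by exact_mod_cast h1fl
      nlinarith [pow_le_pow_left₀ hpos.le hle2 2]
    have key := theta_anti a b c k ha hb hk Ihat hroot (I : ℝ) ((⌊Ihat⌋ : ℤ) : ℝ)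
      (by exact_mod_cast hI) hflR hflI hflc
    rw [hmax]
    exact le_trans (min_le_left _ _) key
  · -- Ihat < I : use the increasing branch with the ceiling point
    have hcl : ⌈Ihat⌉ ≤ (I : ℤ) := Int.ceil_le.2 (by exact_mod_cast hgt.le)
    have hclR : ((⌈Ihat⌉ : ℤ) : ℝ) ≤ (I : ℝ) := by exact_mod_cast hcl
    have key := theta_mono a b c k ha hb hk Ihat hIhat0 hroot
      ((⌈Ihat⌉ : ℤ) : ℝ) (I : ℝ) (Int.le_ceil Ihat) hclR hIc
    exact le_trans (min_le_right _ _) key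
end
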